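/- The upper growth rate of a well quasi-ordered permutation class is attained by an atomic subclass: if C is a well quasi-ordered permutation class, then there exists an atomic permutation class A with A ⊆ C and ugr(A) = ugr(C). -/

import Mathlib

open Filter

/-- A permutation of some finite length `n`. -/
abbrev Permu : Type := Σ n : ℕ, Equiv.Perm (Fin n)

/-- `PLe σ π` : the permutation `σ` is contained in `π` as a pattern. -/
def PLe (σ π : Permu) : Prop :=
  ∃ f : Fin σ.1 → Fin π.1, StrictMono f ∧
    ∀ i j : Fin σ.1, σ.2 i < σ.2 j ↔ π.2 (f i) < π.2 (f j)

/-- A permutation class: a set of permutations closed downward under containment. -/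
def IsPermClass (C : Set Permu) : Prop :=
  ∀ σ π : Permu, PLe σ π → π ∈ C → σ ∈ C

/-- The number of permutations of length `n` in `C`. -/
noncomputable def pcount (C : Set Permu) (n : ℕ) : ℕ :=
  Set.ncard {π ∈ C | π.1 = n}

/-- The upper growth rate of a class, as an extended real. -/
noncomputable def ugr (C : Set Permu) : EReal :=
  limsup (fun n : ℕ => (((pcount C n : ℝ) ^ ((n : ℝ)⁻¹) : ℝ) : EReal)) atTop

/-- The lower growth rate of a class, as an extended real. -/
noncomputable def lgr (C : Set Permu) : EReal :=
  liminf (fun n : ℕ => (((pcount C n : ℝ) ^ ((n : ℝ)⁻¹) : ℝ) : EReal)) atTop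
/-- A set of permutations is well quasi-ordered if it contains no infinite antichain
under the containment order. -/
def Wqo (S : Set Permu) : Prop :=
  ¬ ∃ f : ℕ → Permu, (∀ n, f n ∈ S) ∧ ∀ i j : ℕ, i ≠ j → ¬ PLe (f i) (f j)
/-- A set of permutations is atomic if it satisfies the joint embedding property. -/
def Atomic (A : Set Permu) : Prop :=
  ∀ σ ∈ A, ∀ τ ∈ A, ∃ π ∈ A, PLe σ π ∧ PLe τ π

/-!
If `C` is not atomic, witnesses `σ, τ ∈ C` with no common extension in `C` split `C` into the two
proper subclasses of permutations avoiding `σ` and avoiding `τ`. The upper growth rate of a union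
is the larger of the two rates, because `|(A ∪ B)ₙ| ≤ 2 max |Aₙ| |Bₙ|` and `2 ^ (1 / n) → 1`. So
one of the pieces has the same upper growth rate as `C`, and we descend into it. The descent stops
at an atomic class because the subclasses of a well quasi-ordered class satisfy the descending
chain condition: the differences of a strictly descending chain form a bad sequence.
-/

namespace PLe

theorem refl (σ : Permu) : PLe σ σ :=
  ⟨id, strictMono_id, fun _ _ => Iff.rfl⟩

theorem trans {σ τ π : Permu} (h₁ : PLe σ τ) (h₂ : PLe τ π) : PLe σ π := by
  obtain ⟨f, hf, hfc⟩ := h₁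
  obtain ⟨g, hg, hgc⟩ := h₂
  exact ⟨g ∘ f, hg.comp hf, fun i j => (hfc i j).trans (hgc (f i) (f j))⟩

theorem length_le {σ π : Permu} (h : PLe σ π) : σ.1 ≤ π.1 :=
  let ⟨f, hf, _⟩ := h
  Fin.le_of_injective f hf.injective

end PLe

namespace Permu

theorem finite_setOf_length_eq (n : ℕ) : {π : Permu | π.1 = n}.Finite :=
  (Set.finite_range (Sigma.mk n)).subset fun ⟨_, σ⟩ (h : _ = n) => h ▸ ⟨σ, rfl⟩

theorem finite_setOf_length_le (L : ℕ) : {π : Permu | π.1 ≤ L}.Finite :=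
  (Set.finite_Iic L).preimage' fun n _ => finite_setOf_length_eq n

end Permu

theorem Set.PartiallyWellOrderedOn.wellFoundedOn_ssubset {α : Type*} {r : α → α → Prop}
    {s : Set α} (hs : s.PartiallyWellOrderedOn r) :
    {D : Set α | D ⊆ s ∧ ∀ a b, r a b → b ∈ D → a ∈ D}.WellFoundedOn (· ⊂ ·) := by
  rw [Set.wellFoundedOn_iff_no_descending_seq]
  intro D hD
  have hstep (n : ℕ) : D (n + 1) ⊂ D n := D.map_rel_iff.2 n.lt_succ_self
  have hanti : Antitone D := antitone_nat_of_succ_le fun n => (hstep n).subset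
  choose x hx hx' using fun n => Set.exists_of_ssubset (hstep n)
  obtain ⟨m, n, hmn, hr⟩ := hs.exists_lt (f := x) fun n => (hD n).1 (hx n)
  exact hx' m ((hD (m + 1)).2 _ _ hr (hanti hmn (hx n)))

theorem Wqo.partiallyWellOrderedOn {C : Set Permu} (h : Wqo C) :
    C.PartiallyWellOrderedOn PLe := by
  rw [Set.partiallyWellOrderedOn_iff_exists_lt]
  intro f hfC
  by_contra! hbad
  have : IsTrans Permu (fun a b => PLe b a) := ⟨fun _ _ _ hab hbc => hbc.trans hab⟩
  obtain ⟨g, hdesc | hincomp⟩ := exists_increasing_or_nonincreasing_subseq (fun a b => PLe b a) f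
  · -- a descending chain has bounded length, so it repeats a term
    have hbounded (n : ℕ) : f (g n) ∈ {π : Permu | π.1 ≤ (f (g 0)).1} := by
      rcases n.eq_zero_or_pos with rfl | hn
      · exact le_refl (f (g 0)).1
      · exact (hdesc 0 n hn).length_le
    obtain ⟨m, n, hmn, heq⟩ :=
      (Permu.finite_setOf_length_le _).exists_lt_map_eq_of_forall_mem hbounded
    exact hbad _ _ (g.strictMono hmn) (heq ▸ PLe.refl _)
  · refine h ⟨f ∘ g, fun n => hfC _, fun m n hne => ?_⟩
    rcases hne.lt_or_gt with hlt | hlt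
    · exact hbad _ _ (g.strictMono hlt)
    · exact hincomp _ _ hlt

noncomputable def pcountRoot (C : Set Permu) (n : ℕ) : ℝ :=
  (pcount C n : ℝ) ^ (n : ℝ)⁻¹

theorem pcount_mono {A B : Set Permu} (h : A ⊆ B) (n : ℕ) : pcount A n ≤ pcount B n :=
  Set.ncard_le_ncard (fun _ hπ => ⟨h hπ.1, hπ.2⟩)
    ((Permu.finite_setOf_length_eq n).subset fun _ hπ => hπ.2)

theorem pcount_union_le (A B : Set Permu) (n : ℕ) :
    pcount (A ∪ B) n ≤ 2 * max (pcount A n) (pcount B n) := by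
  have : pcount (A ∪ B) n ≤ pcount A n + pcount B n :=
    (congrArg Set.ncard Set.sep_union).trans_le (Set.ncard_union_le _ _)
  omega

theorem monotone_rpow_natCast {p : ℝ} (hp : 0 ≤ p) : Monotone fun k : ℕ => (k : ℝ) ^ p :=
  fun _ _ h => Real.rpow_le_rpow (Nat.cast_nonneg _) (Nat.cast_le.2 h) hp

theorem pcountRoot_mono {A B : Set Permu} (h : A ⊆ B) (n : ℕ) :
    pcountRoot A n ≤ pcountRoot B n :=
  monotone_rpow_natCast (by positivity) (pcount_mono h n)

theorem pcountRoot_union_le (A B : Set Permu) (n : ℕ) :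
    pcountRoot (A ∪ B) n ≤ 2 ^ (n : ℝ)⁻¹ * max (pcountRoot A n) (pcountRoot B n) := by
  have hp : (0 : ℝ) ≤ (n : ℝ)⁻¹ := by positivity
  calc pcountRoot (A ∪ B) n
      ≤ ((2 * max (pcount A n) (pcount B n) : ℕ) : ℝ) ^ (n : ℝ)⁻¹ :=
        monotone_rpow_natCast hp (pcount_union_le A B n)
    _ = 2 ^ (n : ℝ)⁻¹ * max (pcountRoot A n) (pcountRoot B n) := by
        rw [Nat.cast_mul, Nat.cast_ofNat, Real.mul_rpow zero_le_two (Nat.cast_nonneg _)]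
        exact congrArg _ ((monotone_rpow_natCast hp).map_max)

theorem tendsto_const_rpow_inv_natCast {a : ℝ} (ha : a ≠ 0) :
    Tendsto (fun n : ℕ => a ^ (n : ℝ)⁻¹) atTop (nhds 1) := by
  simpa [Function.comp_def] using
    ((Real.continuousAt_const_rpow ha).tendsto (x := 0)).comp
      tendsto_inv_atTop_nhds_zero_nat

theorem ugr_mono {A B : Set Permu} (h : A ⊆ B) : ugr A ≤ ugr B :=
  limsup_le_limsup (Eventually.of_forall fun n => EReal.coe_le_coe (pcountRoot_mono h n))

theorem ugr_union (A B : Set Permu) : ugr (A ∪ B) = max (ugr A) (ugr B) := by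
  refine le_antisymm ?_ (max_le (ugr_mono Set.subset_union_left) (ugr_mono Set.subset_union_right))
  set u : ℕ → EReal := fun n => ((2 : ℝ) ^ (n : ℝ)⁻¹ : ℝ)
  set v : ℕ → EReal := fun n => max (pcountRoot A n : EReal) (pcountRoot B n)
  have hu : limsup u atTop = 1 :=
    (EReal.tendsto_coe.2 (tendsto_const_rpow_inv_natCast two_ne_zero)).limsup_eq
  calc ugr (A ∪ B) ≤ limsup (u * v) atTop := by
        refine limsup_le_limsup (Eventually.of_forall fun n => ?_)
        simp only [u, v, Pi.mul_apply, ← EReal.coe_strictMono.monotone.map_max, ← EReal.coe_mul]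
        exact EReal.coe_le_coe (pcountRoot_union_le A B n)
    _ ≤ limsup u atTop * limsup v atTop :=
        EReal.limsup_mul_le (Frequently.of_forall fun n => EReal.coe_nonneg.2 (by positivity))
          (Eventually.of_forall fun n =>
            le_max_of_le_left (EReal.coe_nonneg.2 (Real.rpow_nonneg (Nat.cast_nonneg _) _)))
          (Or.inl (hu ▸ one_ne_zero)) (Or.inl (hu ▸ EReal.coe_ne_top 1))
    _ = max (ugr A) (ugr B) := by rw [hu, one_mul, limsup_max]; rfl

theorem IsPermClass.sep_not_contains {D : Set Permu} (hD : IsPermClass D) (σ : Permu) :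
    IsPermClass {π ∈ D | ¬ PLe σ π} :=
  fun _ _ hle hπ => ⟨hD _ _ hle hπ.1, fun h => hπ.2 (h.trans hle)⟩

theorem IsPermClass.exists_ssubset_ugr_eq_of_not_atomic {D : Set Permu} (hD : IsPermClass D)
    (h : ¬ Atomic D) : ∃ D' ⊂ D, IsPermClass D' ∧ ugr D' = ugr D := by
  simp only [Atomic, not_forall, not_exists, not_and] at h
  obtain ⟨σ, hσ, τ, hτ, hno⟩ := h
  have hsplit : {π ∈ D | ¬ PLe σ π} ∪ {π ∈ D | ¬ PLe τ π} = D := by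
    rw [← Set.sep_or, Set.sep_eq_self_iff_mem_true]
    exact fun π hπ => imp_iff_not_or.1 (hno π hπ)
  have hssubset {ρ : Permu} (hρ : ρ ∈ D) : {π ∈ D | ¬ PLe ρ π} ⊂ D :=
    ⟨Set.sep_subset _ _, fun h => (h hρ).2 (PLe.refl ρ)⟩
  have hmax : max (ugr {π ∈ D | ¬ PLe σ π}) (ugr {π ∈ D | ¬ PLe τ π}) = ugr D := by
    rw [← ugr_union, hsplit]
  rcases max_choice (ugr {π ∈ D | ¬ PLe σ π}) (ugr {π ∈ D | ¬ PLe τ π}) with h | h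
  · exact ⟨_, hssubset hσ, hD.sep_not_contains σ, h.symm.trans hmax⟩
  · exact ⟨_, hssubset hτ, hD.sep_not_contains τ, h.symm.trans hmax⟩

/-- The upper growth rate of a well quasi-ordered permutation class is
attained by an atomic subclass. -/
theorem wqo_ugr_attained_by_atomic_subclass
    (C : Set Permu) (hC : IsPermClass C) (hwqo : Wqo C) :
    ∃ A : Set Permu, IsPermClass A ∧ Atomic A ∧ A ⊆ C ∧ ugr A = ugr C := by
  refine hwqo.partiallyWellOrderedOn.wellFoundedOn_ssubset.induction (x := C) ⟨subset_rfl, hC⟩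
    (P := fun D => ∃ A : Set Permu, IsPermClass A ∧ Atomic A ∧ A ⊆ D ∧ ugr A = ugr D)
    fun D ⟨hDC, hD⟩ ih => ?_
  by_cases hat : Atomic D
  · exact ⟨D, hD, hat, subset_rfl, rfl⟩
  obtain ⟨D', hD'D, hD', hugr⟩ := IsPermClass.exists_ssubset_ugr_eq_of_not_atomic hD hat
  obtain ⟨A, hA, hAat, hAD', hAugr⟩ := ih D' ⟨hD'D.subset.trans hDC, hD'⟩ hD'D
  exact ⟨A, hA, hAat, hAD'.trans hD'D.subset, hAugr.trans hugr⟩
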